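/- arXiv:1907.11225 — 2 statements merged into one kernel-verified Lean document; each statement's English description precedes it below -/
import Mathlib

section
/- Let X be a noetherian topological space and let (A_i)_{i ∈ I} be an arbitrary (possibly uncountable) family of subsets of X such that each A_i is a countable union of closed subsets of X. Then the intersection ⋂_{i ∈ I} A_i is itself a countable union of closed subsets of X. -/
open TopologicalSpace Set

/-- In a noetherian topological space, an arbitrary intersection of sets, each of which is
a countable union of closed sets, is itself a countable union of closed sets. -/
theorem iInter_countable_union_closed {X : Type*} [TopologicalSpace X]
    [TopologicalSpace.NoetherianSpace X] {I : Type*} (A : I → Set X)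
    (hA : ∀ i, ∃ F : ℕ → Set X, (∀ n, IsClosed (F n)) ∧ A i = ⋃ n, F n) :
    ∃ F : ℕ → Set X, (∀ n, IsClosed (F n)) ∧ (⋂ i, A i) = ⋃ n, F n := by
  have key : ∀ Z : Closeds X, ∃ F : ℕ → Set X, (∀ n, IsClosed (F n)) ∧
      (Z : Set X) ∩ ⋂ i, A i = ⋃ n, F n := by
    intro Z
    induction Z using WellFoundedLT.induction with
    | ind Z ih =>
      by_cases h : ∀ i, (Z : Set X) ⊆ A i
      · refine ⟨fun _ => Z, fun _ => Z.isClosed, ?_⟩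
        rw [Set.iUnion_const]
        exact Set.inter_eq_left.mpr (Set.subset_iInter h)
      · push_neg at h
        obtain ⟨i, hi⟩ := h
        obtain ⟨G, hGc, hGe⟩ := hA i
        have hlt : ∀ n, (⟨(Z : Set X) ∩ G n, Z.isClosed.inter (hGc n)⟩ : Closeds X) < Z := by
          intro n
          refine lt_of_le_of_ne (fun x hx => hx.1) ?_
          intro hEq
          apply hi
          have hsub : (Z : Set X) ⊆ G n := by
            have h2 : (Z : Set X) ∩ G n = Z := congrArg SetLike.coe hEq
            rw [Set.inter_eq_left] at h2
            exact h2
          exact hGe ▸ hsub.trans (Set.subset_iUnion G n)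
        choose F hFc hFe using fun n => ih _ (hlt n)
        let e : ℕ ≃ ℕ × ℕ := (Denumerable.eqv (ℕ × ℕ)).symm
        refine ⟨fun k => F (e k).1 (e k).2, fun k => hFc _ _, ?_⟩
        have h1 : (Z : Set X) ∩ ⋂ j, A j = ⋃ n, ((Z : Set X) ∩ G n) ∩ ⋂ j, A j := by
          ext x
          simp only [Set.mem_inter_iff, Set.mem_iUnion, Set.mem_iInter]
          constructor
          · rintro ⟨hxZ, hxA⟩
            have hxi : x ∈ A i := hxA i
            rw [hGe] at hxi
            obtain ⟨n, hn⟩ := Set.mem_iUnion.mp hxi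
            exact ⟨n, ⟨hxZ, hn⟩, hxA⟩
          · rintro ⟨n, ⟨hxZ, _⟩, hxA⟩
            exact ⟨hxZ, hxA⟩
        have h2 : ∀ n, ((Z : Set X) ∩ G n) ∩ ⋂ j, A j = ⋃ m, F n m := fun n => hFe n
        rw [h1, Set.iUnion_congr h2]
        rw [show (⋃ n, ⋃ m, F n m) = ⋃ p : ℕ × ℕ, F p.1 p.2 from (Set.iUnion_prod' fun p => F p.1 p.2).symm]
        rw [← e.surjective.iUnion_comp (g := fun p : ℕ × ℕ => F p.1 p.2)]
  obtain ⟨F, hFc, hFe⟩ := key ⊤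
  refine ⟨F, hFc, ?_⟩
  simpa using hFe
end

section
/- Let X be a noetherian sober topological space and let A = ⋃_{i ∈ ℕ} A_i, where each A_i ⊆ X is a locally closed subset. If A is stable under specialization (i.e., for every x ∈ A, every point of the closure of {x} lies in A), then A = ⋃_{i ∈ ℕ} cl(A_i), the union of the closures of the A_i; in particular, A is a countable union of closed subsets of X. -/
open TopologicalSpace

/-- In a noetherian sober space, every point of the closure of a locally closed set is a
specialization of a point of the set. -/
lemma aux_closure_locallyClosed {X : Type*} [TopologicalSpace X]
    [TopologicalSpace.NoetherianSpace X] [QuasiSober X] :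
    ∀ (C : Closeds X) (A : Set X), IsLocallyClosed A → closure A ⊆ (C : Set X) →
      ∀ y ∈ closure A, ∃ x ∈ A, y ∈ closure ({x} : Set X) := by
  intro C
  refine wellFounded_lt.induction (C := fun C : Closeds X => ∀ A : Set X,
    IsLocallyClosed A → closure A ⊆ (C : Set X) →
      ∀ y ∈ closure A, ∃ x ∈ A, y ∈ closure ({x} : Set X)) C ?_
  clear C
  intro C IH A hA hsub y hy
  set C' : Closeds X := ⟨closure A, isClosed_closure⟩ with hC'
  have hle : C' ≤ C := hsub
  rcases lt_or_eq_of_le hle with hlt | heq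
  · exact IH C' hlt A hA subset_rfl y hy
  · -- closure A = C
    have hAne : A.Nonempty := closure_nonempty_iff.mp ⟨y, hy⟩
    by_cases hirr : IsPreirreducible (closure A)
    · have hirr' : IsIrreducible (closure A) := ⟨hAne.closure, hirr⟩
      have hg : IsGenericPoint hirr'.genericPoint (closure A) :=
        hirr'.isGenericPoint_genericPoint isClosed_closure
      set ξ := hirr'.genericPoint with hξ
      obtain ⟨U, Z, hU, hZ, rfl⟩ := hA
      have hξcl : ξ ∈ closure (U ∩ Z) := hg ▸ subset_closure rfl
      have hξU : ξ ∈ U := by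
        by_contra hne
        have h1 : closure ({ξ} : Set X) ⊆ Uᶜ :=
          closure_minimal (Set.singleton_subset_iff.mpr hne) (hU.isClosed_compl)
        rw [hg] at h1
        obtain ⟨a, haU, haZ⟩ := hAne
        exact h1 (subset_closure ⟨haU, haZ⟩) haU
      have hξZ : ξ ∈ Z := closure_minimal Set.inter_subset_right hZ hξcl
      exact ⟨ξ, ⟨hξU, hξZ⟩, hg.symm ▸ hy⟩
    · rw [isPreirreducible_iff_isClosed_union_isClosed] at hirr
      push_neg at hirr
      obtain ⟨z₁, z₂, hz₁, hz₂, hcov, hn₁, hn₂⟩ := hirr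
      have hcov' : A ⊆ z₁ ∪ z₂ := subset_closure.trans hcov
      have hAsplit : A = (A ∩ z₁) ∪ (A ∩ z₂) := by
        rw [← Set.inter_union_distrib_left, Set.inter_eq_left.mpr hcov']
      have hysplit : y ∈ closure (A ∩ z₁) ∪ closure (A ∩ z₂) := by
        rw [← closure_union, ← hAsplit]; exact hy
      have key : ∀ z : Set X, IsClosed z → ¬ closure A ⊆ z →
          y ∈ closure (A ∩ z) → ∃ x ∈ A, y ∈ closure ({x} : Set X) := by
        intro z hz hnz hyz
        set D : Closeds X := ⟨(C : Set X) ∩ z, C.isClosed.inter hz⟩ with hD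
        have hDlt : D < C := by
          refine lt_of_le_of_ne (fun a ha => ha.1) ?_
          intro hDC
          apply hnz
          intro a ha
          have : a ∈ (D : Set X) := by
            rw [hDC]; exact hsub ha
          exact this.2
        have hclsub : closure (A ∩ z) ⊆ (D : Set X) := by
          refine Set.subset_inter ?_ ?_
          · exact (closure_mono Set.inter_subset_left).trans hsub
          · exact closure_minimal Set.inter_subset_right hz
        obtain ⟨x, hx, hyx⟩ := IH D hDlt (A ∩ z) (hA.inter hz.isLocallyClosed) hclsub y hyz
        exact ⟨x, hx.1, hyx⟩
      rcases hysplit with h | h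
      · exact key z₁ hz₁ hn₁ h
      · exact key z₂ hz₂ hn₂ h

/-- In a noetherian sober space, a countable union of locally closed subsets that is stable
under specialization equals the union of the closures of those subsets; in particular, it is
a countable union of closed subsets. -/
theorem iUnion_locallyClosed_stableUnderSpecialization {X : Type*} [TopologicalSpace X]
    [TopologicalSpace.NoetherianSpace X] [QuasiSober X]
    (A : ℕ → Set X) (hA : ∀ i, IsLocallyClosed (A i))
    (hstab : ∀ x ∈ ⋃ i, A i, ∀ y ∈ closure ({x} : Set X), y ∈ ⋃ i, A i) :
    (⋃ i, A i) = ⋃ i, closure (A i) := by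
  apply Set.Subset.antisymm
  · exact Set.iUnion_mono fun i => subset_closure
  · intro y hy
    obtain ⟨i, hyi⟩ := Set.mem_iUnion.mp hy
    obtain ⟨x, hx, hyx⟩ := aux_closure_locallyClosed ⟨closure (A i), isClosed_closure⟩
      (A i) (hA i) subset_rfl y hyi
    exact hstab x (Set.mem_iUnion.mpr ⟨i, hx⟩) y hyx
end
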